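/- arXiv:1505.04289 — 2 statements merged into one kernel-verified Lean document; each statement's English description precedes it below -/
import Mathlib

section
/- Let P and Q be finite posets on [d]. The origin of ℝ^d belongs to the interior of the twinned order polytope Δ(P,−Q) if and only if P and Q possess a common linear extension. -/
/-- A poset ideal (down-set) of a partial order `P` on `Fin d`. -/
def IsIdeal {d : ℕ} (P : PartialOrder (Fin d)) (I : Set (Fin d)) : Prop :=
  ∀ ⦃i j : Fin d⦄, i ∈ I → P.le j i → j ∈ I

/-- The indicator vector `ρ(I) = Σ_{i ∈ I} e_i` of a subset of `[d]`. -/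
noncomputable def rho {d : ℕ} (I : Set (Fin d)) : Fin d → ℝ := I.indicator 1

/-- `σ` is a linear extension of `P`: if `p_{σ a} < p_{σ b}` in `P` then `a < b`. -/
def IsLinExt {d : ℕ} (P : PartialOrder (Fin d)) (σ : Equiv.Perm (Fin d)) : Prop :=
  ∀ a b : Fin d, P.lt (σ a) (σ b) → a < b

/-- `Ω(P, -Q)`. -/
noncomputable def Omega {d : ℕ} (P Q : PartialOrder (Fin d)) : Set (Fin d → ℝ) :=
  {v | ∃ I : Set (Fin d), IsIdeal P I ∧ I.Nonempty ∧ v = rho I} ∪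
  {v | ∃ J : Set (Fin d), IsIdeal Q J ∧ J.Nonempty ∧ v = - rho J} ∪ {0}

/-!
If `σ` is a common linear extension, its initial segments are ideals of both `P` and `Q`, so
`Ω(P,-Q)` contains `±ρ` of each of them. These vectors span `ℝ^d` and form a centrally symmetric
set, whose convex hull is therefore a neighbourhood of `0`.

Conversely, `P` and `Q` have a common linear extension as soon as the union of their strict orders
is acyclic. Along a cycle the vectors `e_a - e_b` of its edges sum to `0`; the sum `p` over the
`P`-edges is then minus the sum over the `Q`-edges, so `v ↦ v ⬝ᵥ p` is nonnegative on every `ρ(I)`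
with `I ∈ 𝒥(P)` and on every `-ρ(J)` with `J ∈ 𝒥(Q)`. Pairing with the height functions
`x ↦ #{y | y < x}` of `P` and of `Q` shows `p ≠ 0`, so `Ω(P,-Q)` lies in a closed half-space
whose boundary contains `0`.
-/

open Set Pointwise

section ConvexGeometry

variable {E : Type*}

theorem zero_notMem_interior_convexHull_of_nonneg [AddCommGroup E] [Module ℝ E]
    [TopologicalSpace E] [ContinuousSMul ℝ E] {s : Set E} (f : E →ₗ[ℝ] ℝ)
    (hf : ∀ x ∈ s, 0 ≤ f x) {u : E} (hu : f u < 0) :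
    (0 : E) ∉ interior (convexHull ℝ s) := by
  intro h0
  have hsmul : ∀ᶠ t in nhds (0 : ℝ), t • u ∈ convexHull ℝ s :=
    (continuous_id.smul continuous_const).continuousAt.preimage_mem_nhds
      (by simpa using mem_interior_iff_mem_nhds.mp h0)
  obtain ⟨t, ht, ht0⟩ := ((hsmul.filter_mono nhdsWithin_le_nhds).and
    (self_mem_nhdsWithin : Ioi (0 : ℝ) ∈ nhdsWithin 0 (Ioi 0))).exists
  have : 0 ≤ f (t • u) :=
    convexHull_min hf (convex_halfSpace_ge f.isLinear 0) ht
  rw [f.map_smul, smul_eq_mul] at this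
  exact (mul_neg_of_pos_of_neg ht0 hu).not_ge this

theorem Convex.zero_mem_of_neg_mem [AddCommGroup E] [Module ℝ E] {K : Set E}
    (hK : Convex ℝ K) (hne : K.Nonempty) (hneg : ∀ x ∈ K, -x ∈ K) : (0 : E) ∈ K := by
  obtain ⟨x, hx⟩ := hne
  simpa using hK hx (hneg x hx) (by norm_num : (0 : ℝ) ≤ 1 / 2) (by norm_num) (add_halves 1)

theorem zero_mem_interior_convexHull_union_neg [NormedAddCommGroup E] [NormedSpace ℝ E]
    [FiniteDimensional ℝ E] {T : Set E} (hT : T.Nonempty) (hspan : Submodule.span ℝ T = ⊤) :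
    (0 : E) ∈ interior (convexHull ℝ (T ∪ -T)) := by
  set K := convexHull ℝ (T ∪ -T)
  have hKneg : -K = K := by
    rw [← convexHull_neg, Set.union_neg, neg_neg, Set.union_comm]
  have hneg : ∀ {U : Set E}, -U = U → ∀ x ∈ U, -x ∈ U := fun hU x hx => by
    rw [← hU]; simpa using hx
  have hK0 : (0 : E) ∈ K := (convex_convexHull ℝ _).zero_mem_of_neg_mem
    ((hT.mono subset_union_left).mono (subset_convexHull ℝ _)) (hneg hKneg)
  have hspanK : affineSpan ℝ K = ⊤ := by
    rw [AffineSubspace.affineSpan_eq_top_iff_vectorSpan_eq_top_of_nonempty ℝ E E ⟨0, hK0⟩,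
      vectorSpan_eq_span_vsub_set_right ℝ hK0, eq_top_iff, ← hspan]
    refine Submodule.span_mono fun x hx => ⟨x, subset_convexHull ℝ _ (Or.inl hx), sub_zero x⟩
  have hint : (interior K).Nonempty := by
    rwa [interior_convexHull_nonempty_iff_affineSpan_eq_top, ← affineSpan_convexHull]
  refine (convex_convexHull ℝ _).interior.zero_mem_of_neg_mem hint (hneg ?_)
  have := (Homeomorph.neg E).image_interior K
  rwa [Homeomorph.coe_neg, image_neg_eq_neg, image_neg_eq_neg, hKneg] at this

end ConvexGeometry

theorem Set.ncard_setOf_rel_lt_of_rel {α : Type*} [Finite α] {r : α → α → Prop}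
    (trans : ∀ {a b c}, r a b → r b c → r a c) (irrefl : ∀ a, ¬ r a a) {a b : α}
    (h : r a b) : {x | r x a}.ncard < {x | r x b}.ncard :=
  Set.ncard_lt_ncard ⟨fun _ hx => trans hx h, fun hsub => irrefl a (hsub h)⟩

theorem Tuple.lt_of_lt_comp_sort {n : ℕ} {α : Type*} [LinearOrder α] {f : Fin n → α}
    {a b : Fin n} (h : f (Tuple.sort f a) < f (Tuple.sort f b)) : a < b :=
  lt_of_not_ge fun hba => h.not_ge (Tuple.monotone_sort f hba)

variable {d : ℕ}

def ltUnion (P Q : PartialOrder (Fin d)) (a b : Fin d) : Prop := P.lt a b ∨ Q.lt a b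

theorem exists_common_linExt_of_acyclic {P Q : PartialOrder (Fin d)}
    (h : ∀ i, ¬ Relation.TransGen (ltUnion P Q) i i) :
    ∃ σ : Equiv.Perm (Fin d), IsLinExt P σ ∧ IsLinExt Q σ := by
  let rank : Fin d → ℕ := fun x => {y | Relation.TransGen (ltUnion P Q) y x}.ncard
  have hrank : ∀ {a b}, ltUnion P Q a b → rank a < rank b := fun hab =>
    Set.ncard_setOf_rel_lt_of_rel Relation.TransGen.trans h (.single hab)
  exact ⟨Tuple.sort rank, fun a b hab => Tuple.lt_of_lt_comp_sort (hrank (.inl hab)),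
    fun a b hab => Tuple.lt_of_lt_comp_sort (hrank (.inr hab))⟩

theorem IsIdeal.rho_le {P : PartialOrder (Fin d)} {I : Set (Fin d)} (hI : IsIdeal P I)
    {a b : Fin d} (hab : P.le a b) : rho I b ≤ rho I a := by
  by_cases hb : b ∈ I
  · simp [rho, hb, hI hb hab]
  · simp [rho, hb, Set.indicator_nonneg]

noncomputable def height (P : PartialOrder (Fin d)) (x : Fin d) : ℝ := {y | P.lt y x}.ncard

theorem height_lt_height {P : PartialOrder (Fin d)} {a b : Fin d} (h : P.lt a b) :
    height P a < height P b := by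
  unfold height
  exact_mod_cast Set.ncard_setOf_rel_lt_of_rel (@lt_trans _ P.toPreorder)
    (@lt_irrefl _ P.toPreorder) h

noncomputable def idealDualCone (P : PartialOrder (Fin d)) : PointedCone ℝ (Fin d → ℝ) :=
  PointedCone.dual (dotProductBilin ℝ ℝ) (rho '' {I | IsIdeal P I})

theorem mem_idealDualCone {P : PartialOrder (Fin d)} {p : Fin d → ℝ} :
    p ∈ idealDualCone P ↔ ∀ I, IsIdeal P I → 0 ≤ rho I ⬝ᵥ p := by
  simp [idealDualCone]

theorem single_sub_single_mem_idealDualCone {P : PartialOrder (Fin d)} {a b : Fin d}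
    (hab : P.le a b) : Pi.single a 1 - Pi.single b 1 ∈ idealDualCone P :=
  mem_idealDualCone.mpr fun I hI => by
    rw [dotProduct_sub, dotProduct_single_one, dotProduct_single_one, sub_nonneg]
    exact hI.rho_le hab

theorem exists_dual_pair_of_ltUnion {P Q : PartialOrder (Fin d)} {a b : Fin d}
    (h : ltUnion P Q a b) :
    ∃ p ∈ idealDualCone P, ∃ q ∈ idealDualCone Q, p + q = Pi.single a 1 - Pi.single b 1 ∧
      p ⬝ᵥ height P + q ⬝ᵥ height Q < 0 := by
  rcases h with hab | hab
  · refine ⟨_, single_sub_single_mem_idealDualCone (@le_of_lt _ P.toPreorder _ _ hab),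
      0, zero_mem _, add_zero _, ?_⟩
    simpa [sub_dotProduct] using height_lt_height hab
  · refine ⟨0, zero_mem _,
      _, single_sub_single_mem_idealDualCone (@le_of_lt _ Q.toPreorder _ _ hab), zero_add _, ?_⟩
    simpa [sub_dotProduct] using height_lt_height hab

theorem exists_dual_pair_of_transGen {P Q : PartialOrder (Fin d)} {a b : Fin d}
    (h : Relation.TransGen (ltUnion P Q) a b) :
    ∃ p ∈ idealDualCone P, ∃ q ∈ idealDualCone Q, p + q = Pi.single a 1 - Pi.single b 1 ∧
      p ⬝ᵥ height P + q ⬝ᵥ height Q < 0 := by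
  induction h using Relation.TransGen.trans_induction_on with
  | single hab => exact exists_dual_pair_of_ltUnion hab
  | trans _ _ ihab ihbc =>
    obtain ⟨p, hp, q, hq, hpq, hlt⟩ := ihab
    obtain ⟨p', hp', q', hq', hpq', hlt'⟩ := ihbc
    refine ⟨p + p', add_mem hp hp', q + q', add_mem hq hq', ?_, ?_⟩
    · rw [add_add_add_comm, hpq, hpq', sub_add_sub_cancel]
    · simp only [add_dotProduct]
      linarith

theorem rho_mem_Omega {P Q : PartialOrder (Fin d)} {I : Set (Fin d)} (hI : IsIdeal P I) :
    rho I ∈ Omega P Q := by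
  rcases I.eq_empty_or_nonempty with rfl | hne
  · exact .inr (by ext; simp [rho])
  · exact .inl (.inl ⟨I, hI, hne, rfl⟩)

theorem neg_rho_mem_Omega {P Q : PartialOrder (Fin d)} {J : Set (Fin d)} (hJ : IsIdeal Q J) :
    -rho J ∈ Omega P Q := by
  rcases J.eq_empty_or_nonempty with rfl | hne
  · exact .inr (by ext; simp [rho])
  · exact .inl (.inr ⟨J, hJ, hne, rfl⟩)

theorem IsLinExt.isIdeal_setOf_lt {P : PartialOrder (Fin d)} {σ : Equiv.Perm (Fin d)}
    (hσ : IsLinExt P σ) (t : ℕ) : IsIdeal P {j | (σ.symm j : ℕ) < t} := by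
  intro i j hi hji
  rcases eq_or_ne j i with rfl | hne
  · exact hi
  · have hlt : P.lt (σ (σ.symm j)) (σ (σ.symm i)) := by
      simpa using @lt_of_le_of_ne _ P _ _ hji hne
    exact (Fin.lt_def.mp (hσ _ _ hlt)).trans hi

theorem rho_setOf_lt_succ_sub_rho_setOf_lt {f : Fin d → ℕ} (hf : Function.Injective f)
    (i : Fin d) : rho {j | f j < f i + 1} - rho {j | f j < f i} = Pi.single i 1 := by
  ext j
  rcases eq_or_ne j i with rfl | hne
  · simp [rho]
  · have hle : f j ≤ f i ↔ f j < f i := (hf.ne hne).le_iff_lt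
    simp [rho, Set.indicator_apply, hne, hle]

theorem zero_mem_interior_of_common_linExt {P Q : PartialOrder (Fin d)}
    {σ : Equiv.Perm (Fin d)} (hP : IsLinExt P σ) (hQ : IsLinExt Q σ) :
    (0 : Fin d → ℝ) ∈ interior (convexHull ℝ (Omega P Q)) := by
  let T : Set (Fin d → ℝ) := range fun t : ℕ => rho {j | (σ.symm j : ℕ) < t}
  have hsub : T ∪ -T ⊆ Omega P Q := by
    rintro v (⟨t, rfl⟩ | ⟨t, h⟩)
    · exact rho_mem_Omega (hP.isIdeal_setOf_lt t)
    · rw [← neg_neg v, ← h]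
      exact neg_rho_mem_Omega (hQ.isIdeal_setOf_lt t)
  have hspan : Submodule.span ℝ T = ⊤ := by
    rw [eq_top_iff, ← (Pi.basisFun ℝ (Fin d)).span_eq, Submodule.span_le]
    rintro _ ⟨i, rfl⟩
    rw [Pi.basisFun_apply, ← rho_setOf_lt_succ_sub_rho_setOf_lt
      (Fin.val_injective.comp σ.symm.injective) i]
    exact Submodule.sub_mem _ (Submodule.subset_span ⟨_, rfl⟩) (Submodule.subset_span ⟨_, rfl⟩)
  exact interior_mono (convexHull_mono hsub)
    (zero_mem_interior_convexHull_union_neg (range_nonempty _) hspan)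

theorem zero_notMem_interior_of_transGen_self {P Q : PartialOrder (Fin d)} {i : Fin d}
    (h : Relation.TransGen (ltUnion P Q) i i) :
    (0 : Fin d → ℝ) ∉ interior (convexHull ℝ (Omega P Q)) := by
  obtain ⟨p, hp, q, hq, hpq, hlt⟩ := exists_dual_pair_of_transGen h
  obtain rfl : q = -p := eq_neg_of_add_eq_zero_right (by rwa [sub_self] at hpq)
  refine zero_notMem_interior_convexHull_of_nonneg ((dotProductBilin ℝ ℝ).flip p) ?_
    (u := height P - height Q) ?_
  · rintro v ((⟨I, hI, -, rfl⟩ | ⟨J, hJ, -, rfl⟩) | rfl)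
    · exact mem_idealDualCone.1 hp I hI
    · simpa using mem_idealDualCone.1 hq J hJ
    · simp
  · simp only [LinearMap.flip_apply, dotProductBilin_apply_apply, dotProduct_comm _ p,
      dotProduct_sub, neg_dotProduct] at hlt ⊢
    linarith

theorem zero_mem_interior_iff_common_linExt {d : ℕ} (P Q : PartialOrder (Fin d)) :
    (0 : Fin d → ℝ) ∈ interior (convexHull ℝ (Omega P Q)) ↔
      ∃ σ : Equiv.Perm (Fin d), IsLinExt P σ ∧ IsLinExt Q σ := by
  refine ⟨fun h0 => ?_, fun ⟨σ, hP, hQ⟩ => zero_mem_interior_of_common_linExt hP hQ⟩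
  refine exists_common_linExt_of_acyclic fun i hi => ?_
  exact zero_notMem_interior_of_transGen_self hi h0
end

section
/- Let P be a finite poset on [d]. Each indicator vector ρ(I) of a nonempty poset ideal I of P is a vertex (extreme point) of the twinned order polytope Δ(P,−Q), and similarly each −ρ(J) for ∅ ≠ J ∈ 𝒥(Q) is a vertex; hence the vertex set of Δ(P,−Q) is Ω(P,−Q) \ {0}. -/
open Classical

/-- A linear functional on `Fin d → ℝ` given by coefficients `c`. -/
noncomputable def lfun {d : ℕ} (c : Fin d → ℝ) : (Fin d → ℝ) →ₗ[ℝ] ℝ where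
  toFun x := ∑ i, c i * x i
  map_add' x y := by simp [mul_add, Finset.sum_add_distrib]
  map_smul' r x := by simp [Finset.mul_sum, mul_left_comm]

/-- Coefficients used to expose the vertex `rho A`. -/
noncomputable def cvec {d : ℕ} (A : Set (Fin d)) : Fin d → ℝ :=
  fun i => if i ∈ A then (1 : ℝ) else -((d : ℝ) + 1)⁻¹

@[simp] lemma lfun_apply {d : ℕ} (c : Fin d → ℝ) (x : Fin d → ℝ) :
    lfun c x = ∑ i, c i * x i := rfl

lemma rho_apply {d : ℕ} (A : Set (Fin d)) (i : Fin d) :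
    rho A i = if i ∈ A then (1 : ℝ) else 0 := by
  simp [rho, Set.indicator_apply]

lemma Mpos {d : ℕ} : (0 : ℝ) < ((d : ℝ) + 1)⁻¹ := by positivity

lemma claim0 {d : ℕ} {A : Set (Fin d)} (hA : A.Nonempty) :
    0 < lfun (cvec A) (rho A) := by
  obtain ⟨a, ha⟩ := hA
  rw [lfun_apply]
  apply Finset.sum_pos'
  · intro i _
    by_cases hi : i ∈ A <;> simp [cvec, rho_apply, hi]
  · exact ⟨a, Finset.mem_univ a, by simp [cvec, rho_apply, ha]⟩

lemma claim1 {d : ℕ} {A B : Set (Fin d)} (hne : B ≠ A) :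
    lfun (cvec A) (rho B) < lfun (cvec A) (rho A) := by
  have hM := Mpos (d := d)
  rw [← sub_pos]
  have hdiff : lfun (cvec A) (rho A) - lfun (cvec A) (rho B)
      = ∑ i, cvec A i * (rho A i - rho B i) := by
    simp [lfun_apply, mul_sub, Finset.sum_sub_distrib]
  rw [hdiff]
  have hwit : ∃ i : Fin d, ¬ (i ∈ A ↔ i ∈ B) := by
    by_contra h
    push_neg at h
    exact hne (Set.ext fun i => ((h i).symm))
  obtain ⟨i₀, hi₀⟩ := hwit
  apply Finset.sum_pos'
  · intro i _
    by_cases hA : i ∈ A <;> by_cases hB : i ∈ B <;>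
      simp [cvec, rho_apply, hA, hB, hM.le]
  · refine ⟨i₀, Finset.mem_univ i₀, ?_⟩
    by_cases hA : i₀ ∈ A <;> by_cases hB : i₀ ∈ B <;>
      simp_all [cvec, rho_apply, hM]

lemma claim2 {d : ℕ} {A : Set (Fin d)} (hA : A.Nonempty) (B : Set (Fin d)) :
    lfun (cvec A) (-rho B) < lfun (cvec A) (rho A) := by
  have hM := Mpos (d := d)
  obtain ⟨a, ha⟩ := hA
  have key : 0 < lfun (cvec A) (rho A) + lfun (cvec A) (rho B) := by
    have hsum : lfun (cvec A) (rho A) + lfun (cvec A) (rho B)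
        = ∑ i, cvec A i * (rho A i + rho B i) := by
      simp [lfun, mul_add, Finset.sum_add_distrib]
    rw [hsum]
    have hlb : ∀ i ∈ Finset.univ,
        rho A i - ((d : ℝ) + 1)⁻¹ ≤ cvec A i * (rho A i + rho B i) := by
      intro i _
      by_cases hiA : i ∈ A <;> by_cases hiB : i ∈ B <;>
        simp [cvec, rho_apply, hiA, hiB, hM.le] <;> linarith
    have h1 : (1 : ℝ) ≤ ∑ i, rho A i := by
      have := Finset.single_le_sum (f := fun i => rho A i)
        (fun i _ => by by_cases hi : i ∈ A <;> simp [rho_apply, hi]) (Finset.mem_univ a)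
      simpa [rho_apply, ha] using this
    have h2 : ∑ i : Fin d, (rho A i - ((d : ℝ) + 1)⁻¹)
        ≤ ∑ i, cvec A i * (rho A i + rho B i) := Finset.sum_le_sum hlb
    have h3 : ∑ i : Fin d, (rho A i - ((d : ℝ) + 1)⁻¹)
        = (∑ i, rho A i) - (d : ℝ) * ((d : ℝ) + 1)⁻¹ := by
      rw [Finset.sum_sub_distrib]
      simp [mul_comm]
    have h4 : (d : ℝ) * ((d : ℝ) + 1)⁻¹ < 1 := by
      rw [← div_eq_mul_inv, div_lt_one (by positivity)]
      linarith
    linarith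
  rw [map_neg]
  linarith

/-- If a linear functional attains a strict maximum over `s` exactly at `x ∈ s`,
then `x` is an extreme point of the convex hull of `s`. -/
lemma extreme_of_functional {d : ℕ} {s : Set (Fin d → ℝ)} {x : Fin d → ℝ} (hx : x ∈ s)
    (f : (Fin d → ℝ) →ₗ[ℝ] ℝ) (hf : ∀ y ∈ s, y ≠ x → f y < f x) :
    x ∈ Set.extremePoints ℝ (convexHull ℝ s) := by
  have hle : ∀ y ∈ convexHull ℝ s, f y ≤ f x := by
    intro y hy
    have hsub : convexHull ℝ s ⊆ {y | f y ≤ f x} := by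
      apply convexHull_min
      · intro z hz
        by_cases h : z = x
        · simp [h]
        · exact (hf z hz h).le
      · intro a ha b hb u v hu hv huv
        simp only [Set.mem_setOf_eq] at ha hb ⊢
        have heq : f (u • a + v • b) = u * f a + v * f b := by
          simp [map_add, map_smul]
        have h1 : u * f a ≤ u * f x := mul_le_mul_of_nonneg_left ha hu
        have h2 : v * f b ≤ v * f x := mul_le_mul_of_nonneg_left hb hv
        have h3 : u * f x + v * f x = f x := by rw [← add_mul, huv, one_mul]
        rw [heq]
        linarith
    exact hsub hy
  have key : ∀ y ∈ convexHull ℝ s, f y = f x → y = x := by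
    intro y hy hfy
    rw [convexHull_eq] at hy
    obtain ⟨ι, t, w, z, hw0, hw1, hz, hyeq⟩ := hy
    rw [Finset.centerMass_eq_of_sum_1 _ _ hw1] at hyeq
    have hfz : ∀ i ∈ t, f (z i) ≤ f x := fun i hi => by
      by_cases h : z i = x
      · simp [h]
      · exact (hf _ (hz i hi) h).le
    have hfy' : ∑ i ∈ t, w i * f (z i) = f x := by
      have : f y = ∑ i ∈ t, w i * f (z i) := by
        rw [← hyeq]
        simp [map_sum, map_smul]
      rw [← this, hfy]
    have hzero : ∑ i ∈ t, w i * (f x - f (z i)) = 0 := by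
      have hsplit : ∑ i ∈ t, w i * (f x - f (z i))
          = (∑ i ∈ t, w i) * f x - ∑ i ∈ t, w i * f (z i) := by
        rw [Finset.sum_mul, ← Finset.sum_sub_distrib]
        exact Finset.sum_congr rfl fun i _ => by ring
      rw [hsplit, hw1, hfy']; ring
    have hterm : ∀ i ∈ t, w i * (f x - f (z i)) = 0 := by
      rw [← Finset.sum_eq_zero_iff_of_nonneg
        (fun i hi => mul_nonneg (hw0 i hi) (by linarith [hfz i hi]))]
      exact hzero
    have hsmul : ∀ i ∈ t, w i • z i = w i • x := by
      intro i hi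
      rcases mul_eq_zero.1 (hterm i hi) with h | h
      · simp [h]
      · have hfzi : f (z i) = f x := by linarith [sub_eq_zero.1 h]
        have : z i = x := by
          by_contra hne
          exact absurd hfzi (ne_of_lt (hf _ (hz i hi) hne))
        rw [this]
    have : y = (∑ i ∈ t, w i) • x := by
      rw [← hyeq, Finset.sum_smul]
      exact Finset.sum_congr rfl hsmul
    rw [hw1, one_smul] at this
    exact this
  rw [mem_extremePoints]
  refine ⟨subset_convexHull ℝ s hx, ?_⟩
  intro y hy z hz hseg
  obtain ⟨a, b, ha, hb, hab, habx⟩ := hseg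
  have hfx : f x = a * f y + b * f z := by
    rw [← habx]; simp [map_add, map_smul]
  have h3 : a * f x + b * f x = f x := by rw [← add_mul, hab, one_mul]
  have hfy : f y = f x := by
    by_contra h
    have hlt : f y < f x := lt_of_le_of_ne (hle y hy) h
    have : a * f y < a * f x := mul_lt_mul_of_pos_left hlt ha
    have h2 : b * f z ≤ b * f x := mul_le_mul_of_nonneg_left (hle z hz) hb.le
    linarith
  have hfz : f z = f x := by
    by_contra h
    have hlt : f z < f x := lt_of_le_of_ne (hle z hz) h
    have : b * f z < b * f x := mul_lt_mul_of_pos_left hlt hb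
    have h1 : a * f y ≤ a * f x := mul_le_mul_of_nonneg_left (hle y hy) ha.le
    linarith
  exact ⟨key y hy hfy, key z hz hfz⟩

theorem extremePoints_eq_Omega_sdiff_zero {d : ℕ} (hd : 0 < d) (P Q : PartialOrder (Fin d)) :
    Set.extremePoints ℝ (convexHull ℝ (Omega P Q)) = Omega P Q \ {0} := by
  have h0 : (0 : Fin d → ℝ) ∈ Omega P Q := Or.inr rfl
  have huniv : ∀ (R : PartialOrder (Fin d)), IsIdeal R Set.univ :=
    fun R i j _ _ => trivial
  have hu_mem : rho (Set.univ : Set (Fin d)) ∈ Omega P Q :=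
    Or.inl (Or.inl ⟨Set.univ, huniv P, ⟨⟨0, hd⟩, trivial⟩, rfl⟩)
  have hnu_mem : -rho (Set.univ : Set (Fin d)) ∈ Omega P Q :=
    Or.inl (Or.inr ⟨Set.univ, huniv Q, ⟨⟨0, hd⟩, trivial⟩, rfl⟩)
  ext v
  constructor
  · intro hv
    refine ⟨extremePoints_convexHull_subset hv, ?_⟩
    intro hv0
    simp only [Set.mem_singleton_iff] at hv0
    subst hv0
    rw [mem_extremePoints] at hv
    have hseg : (0 : Fin d → ℝ) ∈
        openSegment ℝ (rho (Set.univ : Set (Fin d))) (-rho (Set.univ : Set (Fin d))) := by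
      refine ⟨1/2, 1/2, by norm_num, by norm_num, by norm_num, ?_⟩
      rw [smul_neg, add_neg_cancel]
    have := (hv.2 _ (subset_convexHull ℝ _ hu_mem) _
      (subset_convexHull ℝ _ hnu_mem) hseg).1
    have h1 : rho (Set.univ : Set (Fin d)) ⟨0, hd⟩ = 1 := by
      simp [rho_apply]
    rw [this] at h1
    simp at h1
  · rintro ⟨hv, hv0⟩
    simp only [Set.mem_singleton_iff] at hv0
    rcases hv with (⟨A, _, hAne, rfl⟩ | ⟨A, _, hAne, rfl⟩) | h
    · -- v = rho A
      apply extreme_of_functional (Or.inl (Or.inl ⟨A, ‹_›, hAne, rfl⟩)) (lfun (cvec A))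
      rintro y ((⟨B, _, _, rfl⟩ | ⟨B, _, _, rfl⟩) | hy) hne
      · exact claim1 (fun h => hne (by rw [h]))
      · exact claim2 hAne B
      · simp only [Set.mem_singleton_iff] at hy
        subst hy
        rw [map_zero]
        exact claim0 hAne
    · -- v = -rho A
      apply extreme_of_functional (Or.inl (Or.inr ⟨A, ‹_›, hAne, rfl⟩)) (-lfun (cvec A))
      rintro y ((⟨B, _, _, rfl⟩ | ⟨B, _, _, rfl⟩) | hy) hne
      · have := claim2 hAne B
        simp only [LinearMap.neg_apply, map_neg] at *
        linarith
      · have hBA : B ≠ A := fun h => hne (by rw [h])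
        have := claim1 hBA
        simp only [LinearMap.neg_apply, map_neg] at *
        linarith
      · simp only [Set.mem_singleton_iff] at hy
        subst hy
        have := claim0 hAne
        simp only [LinearMap.neg_apply, map_neg, map_zero]
        linarith
    · exact absurd h hv0
end
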